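/- For every x ∈ ℝ, W_{0,0}(x) = (1/√2) V_0(x/√2). -/

import Mathlib

open MeasureTheory

/-- The regularized Coulomb potential
`V_m(x) = (1/m!) ∫₀^∞ u^m e^{−u} (x² + u)^{−1/2} du`. -/
noncomputable def Vm (m : ℕ) (x : ℝ) : ℝ :=
  (1 / (m.factorial : ℝ)) *
    ∫ u in Set.Ioi (0 : ℝ), u ^ m * Real.exp (-u) / Real.sqrt (x ^ 2 + u)

/-- The Landau state `γ_m(ζ) = (π m!)^{−1/2} ζ̄^m e^{−|ζ|²/2}` on `ℝ² ≅ ℂ`. -/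
noncomputable def landau (m : ℕ) (ζ : ℂ) : ℂ :=
  (((Real.pi * (m.factorial : ℝ)) ^ (-(1 : ℝ) / 2) : ℝ) : ℂ) *
    (starRingEnd ℂ ζ) ^ m * Complex.exp ((((-(‖ζ‖) ^ 2 / 2 : ℝ)) : ℂ))

/-- The effective interaction
`W_{m,m'}(x) = ∫∫ |γ_m(ζ₁)|² |γ_{m'}(ζ₂)|² (x² + |ζ₁ − ζ₂|²)^{−1/2} dζ₁ dζ₂`. -/
noncomputable def Wpair (m m' : ℕ) (x : ℝ) : ℝ :=
  ∫ ζ : ℂ × ℂ,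
    ‖landau m ζ.1‖ ^ 2 * ‖landau m' ζ.2‖ ^ 2 /
      Real.sqrt (x ^ 2 + ‖ζ.1 - ζ.2‖ ^ 2)

open Real Set
open scoped ENNReal

/-! With `w = ζ₁ - ζ₂` the double integral pairs the kernel `(x² + |w|²)^{-1/2}` with the
autocorrelation of the Gaussian density `π⁻¹ e^{-|ζ|²}`, which by completing the square is
`(2π)⁻¹ e^{-|w|²/2}`. The remaining integral over `ℂ` is radial, and polar coordinates followed
by `u = |w|²/2` turn it into `∫₀^∞ e^{-u} (x² + 2u)^{-1/2} du = V₀(x/√2)/√2`. Everything is done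
with lower Lebesgue integrals, so no integrability of the kernel (singular at `x = 0`) is needed.
-/

theorem lintegral_prod_mul_mul_comp_sub {G : Type*} [MeasurableSpace G] [AddGroup G]
    [MeasurableAdd₂ G] [MeasurableNeg G] {μ : Measure G} [SFinite μ] [μ.IsAddRightInvariant]
    {f g K : G → ℝ≥0∞} (hf : Measurable f) (hg : Measurable g) (hK : Measurable K) :
    ∫⁻ p, f p.1 * g p.2 * K (p.1 - p.2) ∂μ.prod μ =
      ∫⁻ w, (∫⁻ ζ, f (w + ζ) * g ζ ∂μ) * K w ∂μ := by
  rw [lintegral_prod_symm' _ (by fun_prop)]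
  calc ∫⁻ ζ, ∫⁻ ζ', f ζ' * g ζ * K (ζ' - ζ) ∂μ ∂μ
      = ∫⁻ ζ, ∫⁻ w, f (w + ζ) * g ζ * K w ∂μ ∂μ := by
        refine lintegral_congr fun ζ => ?_
        rw [← lintegral_add_right_eq_self _ ζ]
        simp only [add_sub_cancel_right]
    _ = ∫⁻ w, ∫⁻ ζ, f (w + ζ) * g ζ * K w ∂μ ∂μ :=
        lintegral_lintegral_swap (by fun_prop)
    _ = _ := lintegral_congr fun w => lintegral_mul_const _ (by fun_prop)

section InnerProductSpace

variable {V : Type*} [NormedAddCommGroup V] [InnerProductSpace ℝ V]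

theorem norm_add_sq_add_norm_sq (w ζ : V) :
    ‖w + ζ‖ ^ 2 + ‖ζ‖ ^ 2 = 2 * ‖ζ + (2⁻¹ : ℝ) • w‖ ^ 2 + ‖w‖ ^ 2 / 2 := by
  rw [norm_add_sq_real, norm_add_sq_real, inner_smul_right, norm_smul, real_inner_comm]
  norm_num
  ring

variable [FiniteDimensional ℝ V] [MeasurableSpace V] [BorelSpace V]

theorem lintegral_exp_neg_mul_norm_sq {b : ℝ} (hb : 0 < b) :
    ∫⁻ v : V, ENNReal.ofReal (exp (-b * ‖v‖ ^ 2)) =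
      ENNReal.ofReal ((π / b) ^ (Module.finrank ℝ V / 2 : ℝ)) := by
  have hint : Integrable (fun v : V => exp (-b * ‖v‖ ^ 2)) := by
    refine (GaussianFourier.integrable_cexp_neg_mul_sq_norm_add
      (b := b) (by simpa using hb) 0 (0 : V)).norm.congr (.of_forall fun v => ?_)
    simp [Complex.norm_exp, ← Complex.ofReal_pow]
  rw [← ofReal_integral_eq_lintegral_ofReal hint (.of_forall fun v => (exp_pos _).le),
    GaussianFourier.integral_rexp_neg_mul_sq_norm hb]

theorem lintegral_exp_neg_norm_add_sq_mul_exp_neg_norm_sq (w : V) :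
    ∫⁻ ζ : V, ENNReal.ofReal (exp (-‖w + ζ‖ ^ 2)) * ENNReal.ofReal (exp (-‖ζ‖ ^ 2)) =
      ENNReal.ofReal ((π / 2) ^ (Module.finrank ℝ V / 2 : ℝ)) *
        ENNReal.ofReal (exp (-‖w‖ ^ 2 / 2)) := by
  have hsplit : ∀ ζ : V,
      ENNReal.ofReal (exp (-‖w + ζ‖ ^ 2)) * ENNReal.ofReal (exp (-‖ζ‖ ^ 2)) =
        ENNReal.ofReal (exp (-2 * ‖ζ + (2⁻¹ : ℝ) • w‖ ^ 2)) *
          ENNReal.ofReal (exp (-‖w‖ ^ 2 / 2)) := fun ζ => by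
    rw [← ENNReal.ofReal_mul (exp_pos _).le, ← ENNReal.ofReal_mul (exp_pos _).le,
      ← exp_add, ← exp_add]
    congr 2
    linarith [norm_add_sq_add_norm_sq w ζ]
  simp_rw [hsplit]
  rw [lintegral_mul_const' _ _ ENNReal.ofReal_ne_top,
    lintegral_add_right_eq_self (fun ζ => ENNReal.ofReal (exp (-2 * ‖ζ‖ ^ 2))),
    lintegral_exp_neg_mul_norm_sq two_pos]

end InnerProductSpace

theorem lintegral_comp_norm_complex {f : ℝ → ℝ≥0∞} (hf : Measurable f) :
    ∫⁻ w : ℂ, f ‖w‖ = ENNReal.ofReal (2 * π) * ∫⁻ r in Ioi 0, ENNReal.ofReal r * f r := by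
  rw [← Complex.lintegral_comp_polarCoord_symm, polarCoord_target, Measure.volume_eq_prod]
  simp_rw [Complex.norm_polarCoord_symm, smul_eq_mul]
  rw [setLIntegral_prod _ (by fun_prop), ← lintegral_const_mul' _ _ ENNReal.ofReal_ne_top]
  refine setLIntegral_congr_fun measurableSet_Ioi fun r (hr : 0 < r) => ?_
  dsimp only
  rw [abs_of_pos hr, setLIntegral_const, volume_Ioo, mul_comm, sub_neg_eq_add, ← two_mul]

theorem setLIntegral_Ioi_mul_comp_sq_div (g : ℝ → ℝ≥0∞) {c : ℝ} (hc : 0 < c) :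
    ∫⁻ r in Ioi 0, ENNReal.ofReal r * g (r ^ 2 / c) =
      ENNReal.ofReal (c / 2) * ∫⁻ u in Ioi 0, g u := by
  have himage : (fun r : ℝ => r ^ 2 / c) '' Ioi 0 = Ioi 0 := by
    refine Subset.antisymm
      (image_subset_iff.2 fun r (hr : 0 < r) => show 0 < r ^ 2 / c by positivity)
      fun u (hu : 0 < u) => ⟨√(c * u), sqrt_pos.2 (by positivity), ?_⟩
    dsimp only
    rw [sq_sqrt (by positivity)]
    field_simp
  have hderiv : ∀ r ∈ Ioi (0 : ℝ),
      HasDerivWithinAt (fun r : ℝ => r ^ 2 / c) (2 * r / c) (Ioi 0) r := fun r _ => by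
    simpa using ((hasDerivAt_pow 2 r).div_const c).hasDerivWithinAt
  have hinj : InjOn (fun r : ℝ => r ^ 2 / c) (Ioi 0) := fun a (ha : 0 < a) b (hb : 0 < b) hab => by
    have : a ^ 2 = b ^ 2 := by simpa [hc.ne'] using hab
    exact (pow_left_inj₀ ha.le hb.le two_ne_zero).1 this
  nth_rw 2 [← himage]
  rw [lintegral_image_eq_lintegral_abs_deriv_mul measurableSet_Ioi hderiv hinj,
    ← lintegral_const_mul' _ _ ENNReal.ofReal_ne_top]
  refine setLIntegral_congr_fun measurableSet_Ioi fun r (hr : (0 : ℝ) < r) => ?_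
  rw [← mul_assoc, ← ENNReal.ofReal_mul (by positivity), abs_of_pos (by positivity)]
  congr 2
  field_simp

theorem lintegral_comp_norm_sq_div_complex {g : ℝ → ℝ≥0∞} (hg : Measurable g) {c : ℝ}
    (hc : 0 < c) :
    ∫⁻ w : ℂ, g (‖w‖ ^ 2 / c) = ENNReal.ofReal (π * c) * ∫⁻ u in Ioi 0, g u := by
  rw [lintegral_comp_norm_complex (f := fun r => g (r ^ 2 / c)) (by fun_prop),
    setLIntegral_Ioi_mul_comp_sq_div g hc, ← mul_assoc, ← ENNReal.ofReal_mul (by positivity)]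
  congr 2
  ring

theorem continuous_landau (m : ℕ) : Continuous (landau m) := by
  unfold landau
  fun_prop

theorem norm_landau_zero_sq (ζ : ℂ) : ‖landau 0 ζ‖ ^ 2 = π⁻¹ * exp (-‖ζ‖ ^ 2) := by
  simp only [landau, Nat.factorial_zero, Nat.cast_one, mul_one, pow_zero, norm_mul,
    Complex.norm_exp, Complex.norm_real, Complex.ofReal_re, Real.norm_eq_abs, mul_pow]
  rw [abs_of_pos (by positivity), ← exp_nat_mul, ← rpow_natCast, ← rpow_mul pi_pos.le]
  norm_num [rpow_neg_one]
  ring_nf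

theorem lintegral_norm_landau_zero_sq_mul (w : ℂ) :
    ∫⁻ ζ, ENNReal.ofReal (‖landau 0 (w + ζ)‖ ^ 2) * ENNReal.ofReal (‖landau 0 ζ‖ ^ 2) =
      ENNReal.ofReal ((2 * π)⁻¹ * exp (-‖w‖ ^ 2 / 2)) := by
  have hfactor : ∀ ζ : ℂ,
      ENNReal.ofReal (‖landau 0 (w + ζ)‖ ^ 2) * ENNReal.ofReal (‖landau 0 ζ‖ ^ 2) =
        ENNReal.ofReal (π⁻¹ * π⁻¹) *
          (ENNReal.ofReal (exp (-‖w + ζ‖ ^ 2)) * ENNReal.ofReal (exp (-‖ζ‖ ^ 2))) := fun ζ => by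
    have hπ : 0 ≤ π⁻¹ := inv_nonneg.2 pi_pos.le
    rw [norm_landau_zero_sq, norm_landau_zero_sq, ENNReal.ofReal_mul hπ, ENNReal.ofReal_mul hπ,
      ENNReal.ofReal_mul hπ]
    ring
  rw [lintegral_congr hfactor, lintegral_const_mul' _ _ ENNReal.ofReal_ne_top,
    lintegral_exp_neg_norm_add_sq_mul_exp_neg_norm_sq, Complex.finrank_real_complex,
    ← ENNReal.ofReal_mul (by positivity), ← ENNReal.ofReal_mul (by positivity)]
  norm_num
  field_simp

theorem Wpair_eq_toReal_lintegral (m m' : ℕ) (x : ℝ) :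
    Wpair m m' x = (∫⁻ w : ℂ, (∫⁻ ζ, ENNReal.ofReal (‖landau m (w + ζ)‖ ^ 2) *
      ENNReal.ofReal (‖landau m' ζ‖ ^ 2)) * ENNReal.ofReal (√(x ^ 2 + ‖w‖ ^ 2))⁻¹).toReal := by
  have hm := continuous_landau m
  have hm' := continuous_landau m'
  rw [Wpair, integral_eq_lintegral_of_nonneg_ae (.of_forall fun p => by positivity)
    (by fun_prop : Measurable _).aestronglyMeasurable]
  congr 1
  have hsplit : ∀ p : ℂ × ℂ, ENNReal.ofReal
      (‖landau m p.1‖ ^ 2 * ‖landau m' p.2‖ ^ 2 / √(x ^ 2 + ‖p.1 - p.2‖ ^ 2)) =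
      ENNReal.ofReal (‖landau m p.1‖ ^ 2) * ENNReal.ofReal (‖landau m' p.2‖ ^ 2) *
        ENNReal.ofReal (√(x ^ 2 + ‖p.1 - p.2‖ ^ 2))⁻¹ := fun p => by
    rw [div_eq_mul_inv, ENNReal.ofReal_mul (by positivity), ENNReal.ofReal_mul (by positivity)]
  rw [lintegral_congr hsplit, Measure.volume_eq_prod]
  exact lintegral_prod_mul_mul_comp_sub (f := fun ζ => ENNReal.ofReal (‖landau m ζ‖ ^ 2))
    (g := fun ζ => ENNReal.ofReal (‖landau m' ζ‖ ^ 2))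
    (K := fun w => ENNReal.ofReal (√(x ^ 2 + ‖w‖ ^ 2))⁻¹) (by fun_prop) (by fun_prop) (by fun_prop)

/-- `W_{0,0}(x) = (1/√2) V_0(x/√2)` for every `x`. -/
theorem W00_eq (x : ℝ) :
    Wpair 0 0 x = (1 / Real.sqrt 2) * Vm 0 (x / Real.sqrt 2) := by
  set g : ℝ → ℝ≥0∞ := fun u => ENNReal.ofReal (exp (-u) / √(x ^ 2 + 2 * u)) with hg
  have hkernel : ∀ w : ℂ,
      (∫⁻ ζ, ENNReal.ofReal (‖landau 0 (w + ζ)‖ ^ 2) * ENNReal.ofReal (‖landau 0 ζ‖ ^ 2)) *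
        ENNReal.ofReal (√(x ^ 2 + ‖w‖ ^ 2))⁻¹ =
      ENNReal.ofReal (2 * π)⁻¹ * g (‖w‖ ^ 2 / 2) := fun w => by
    rw [lintegral_norm_landau_zero_sq_mul, hg, ← ENNReal.ofReal_mul (by positivity),
      ← ENNReal.ofReal_mul (by positivity), mul_div_cancel₀ _ two_ne_zero]
    ring_nf
  have hVm : Vm 0 (x / √2) = ∫ u in Ioi 0, exp (-u) / √(x ^ 2 / 2 + u) := by
    simp [Vm, div_pow]
  calc Wpair 0 0 x = (∫⁻ w : ℂ, ENNReal.ofReal (2 * π)⁻¹ * g (‖w‖ ^ 2 / 2)).toReal := by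
        rw [Wpair_eq_toReal_lintegral, lintegral_congr hkernel]
    _ = (∫⁻ u in Ioi 0, g u).toReal := by
        rw [lintegral_const_mul _ (by fun_prop), lintegral_comp_norm_sq_div_complex (by fun_prop)
          two_pos, ← mul_assoc, ← ENNReal.ofReal_mul (by positivity), mul_comm 2 π,
          inv_mul_cancel₀ (by positivity), ENNReal.ofReal_one, one_mul]
    _ = ∫ u in Ioi 0, exp (-u) / √(x ^ 2 + 2 * u) :=
        (integral_eq_lintegral_of_nonneg_ae (.of_forall fun u => by positivity)
          (by fun_prop : Measurable _).aestronglyMeasurable).symm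
    _ = (1 / √2) * Vm 0 (x / √2) := by
        rw [hVm, ← integral_const_mul]
        refine setIntegral_congr_fun measurableSet_Ioi fun u _ => ?_
        rw [show x ^ 2 + 2 * u = 2 * (x ^ 2 / 2 + u) by ring, sqrt_mul zero_le_two]
        field_simp
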